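/- Decrease condition outside the residual region: under the transformed closed-loop system assumptions, at any time t ≥ 0 at which Σ_{i=1}^n c̄_i z_i(t)²/ψ̄_i ≥ W_d, or at which (1/2) Σ_{i=1}^n Σ_{j=1}^R σ_{i,j} ‖Φ_{i,j}(t)‖²/γ_{i,j} ≥ W_d, one has V′(t) ≤ 0; moreover V′(t) ≤ 0 at any time t at which V(t) ≥ W_d/β_d. -/

import Mathlib

lemma telescope_aux (n : ℕ) (hn : 1 ≤ n) (a : ℕ → ℝ) (h0 : a 0 = 0) (htop : a (n+1) = 0) :
    ∑ i ∈ Finset.Icc 1 n, a i * a (i+1) = ∑ i ∈ Finset.Icc 1 n, a i * a (i-1) := by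
  obtain ⟨m, rfl⟩ := Nat.exists_eq_add_of_le hn
  have hIcc : ∀ f : ℕ → ℝ, ∑ i ∈ Finset.Icc 1 (1+m), f i = ∑ i ∈ Finset.range (m+1), f (1+i) := by
    intro f
    rw [← Finset.Ico_add_one_right_eq_Icc, Finset.sum_Ico_eq_sum_range]
    have : 1 + m + 1 - 1 = m + 1 := by omega
    rw [this]
  rw [hIcc, hIcc, Finset.sum_range_succ, Finset.sum_range_succ']
  have h1 : a (1 + m + 1) = 0 := by rw [show 1+m+1 = (1+m)+1 from rfl, htop]
  rw [h1, h0]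
  simp only [mul_zero, add_zero]
  apply Finset.sum_congr rfl
  intro i _
  have e1 : 1 + (i+1) - 1 = 1 + i := by omega
  have e2 : 1 + (i + 1) = 1 + i + 1 := by omega
  rw [e1, e2]
  ring

set_option maxHeartbeats 1600000 in
/-- Decrease condition outside the residual region: under the transformed closed-loop system assumptions, `V′(t) ≤ 0` at any time `t ≥ 0` at which `Σᵢ c̄ᵢ zᵢ(t)²/ψ̄ᵢ ≥ W_d`, or at which `(1/2) Σᵢ Σⱼ σᵢⱼ ‖Φᵢⱼ(t)‖²/γᵢⱼ ≥ W_d`, or at which `V(t) ≥ W_d/β_d`. -/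
theorem decrease_outside_residual_region
    (n R : ℕ) (hn : 1 ≤ n) (hR : 1 ≤ R)
    (N : ℕ → ℕ → ℕ)
    (z z' : ℕ → ℝ → ℝ)
    (ψ ψ' : ℕ → ℝ → ℝ)
    (Φ Φ' : (i : ℕ) → (j : ℕ) → ℝ → EuclideanSpace ℝ (Fin (N i j)))
    (ρ : ℕ → ℝ → ℝ)
    (ζ : (i : ℕ) → (j : ℕ) → ℝ → EuclideanSpace ℝ (Fin (N i j)))
    (δ : ℕ → ℝ → ℝ)
    (ψl ψu ψd d k c : ℕ → ℝ)
    (γ σ : ℕ → ℕ → ℝ)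
    (θ : (i : ℕ) → (j : ℕ) → EuclideanSpace ℝ (Fin (N i j)))
    (hψl : ∀ i ∈ Finset.Icc 1 n, 0 < ψl i)
    (hψb : ∀ i ∈ Finset.Icc 1 n, ∀ t : ℝ, 0 ≤ t → ψl i ≤ ψ i t ∧ ψ i t ≤ ψu i)
    (hψd : ∀ i ∈ Finset.Icc 1 n, ∀ t : ℝ, 0 ≤ t → |ψ' i t| ≤ ψd i)
    (hδ : ∀ i ∈ Finset.Icc 1 n, ∀ t : ℝ, 0 ≤ t → |δ i t| ≤ d i)
    (hk : ∀ i ∈ Finset.Icc 1 n, 0 < k i)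
    (hγ : ∀ i ∈ Finset.Icc 1 n, ∀ j ∈ Finset.Icc 1 R, 0 < γ i j)
    (hσ : ∀ i ∈ Finset.Icc 1 n, ∀ j ∈ Finset.Icc 1 R, 0 < σ i j)
    (hc : ∀ i ∈ Finset.Icc 1 n, ψd i / (2 * ψl i) < c i)
    (hzdiff : ∀ i ∈ Finset.Icc 1 n, ∀ t : ℝ, 0 ≤ t → HasDerivAt (z i) (z' i t) t)
    (hψdiff : ∀ i ∈ Finset.Icc 1 n, ∀ t : ℝ, 0 ≤ t → HasDerivAt (ψ i) (ψ' i t) t)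
    (hΦdiff : ∀ i ∈ Finset.Icc 1 n, ∀ j ∈ Finset.Icc 1 R, ∀ t : ℝ, 0 ≤ t →
      HasDerivAt (Φ i j) (Φ' i j t) t)
    (hzzero : ∀ t : ℝ, z 0 t = 0)
    (hztop : ∀ t : ℝ, z (n + 1) t = 0)
    (hdyn : ∀ i ∈ Finset.Icc 1 n, ∀ t : ℝ, 0 ≤ t →
      z' i t = -(c i) * z i t + ψ i t * z (i + 1) t
        + ψ i t * ((∑ j ∈ Finset.Icc 1 R, ρ j t * (inner ℝ (Φ i j t) (ζ i j t) : ℝ)) - δ i t)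
        + ψ i t * (-(k i) * z i t - z (i - 1) t))
    (hadapt : ∀ i ∈ Finset.Icc 1 n, ∀ j ∈ Finset.Icc 1 R, ∀ t : ℝ, 0 ≤ t →
      Φ' i j t = (-(ρ j t) * γ i j * z i t) • ζ i j t - σ i j • (Φ i j t + θ i j))
    (V : ℝ → ℝ)
    (hV : ∀ t : ℝ, V t = (1 / 2) * ∑ i ∈ Finset.Icc 1 n, (z i t) ^ 2 / ψ i t
      + (1 / 2) * ∑ i ∈ Finset.Icc 1 n, ∑ j ∈ Finset.Icc 1 R, ‖Φ i j t‖ ^ 2 / γ i j)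
    (Wd : ℝ)
    (hWd : Wd = ∑ i ∈ Finset.Icc 1 n, (d i) ^ 2 / (4 * k i)
      + (1 / 2) * ∑ i ∈ Finset.Icc 1 n, ∑ j ∈ Finset.Icc 1 R, σ i j * ‖θ i j‖ ^ 2 / γ i j)
    (βd : ℝ)
    (hβd : βd = min
      (2 * ((Finset.Icc 1 n).inf' (Finset.nonempty_Icc.mpr hn)
          (fun i => c i - ψd i / (2 * ψl i)))
        * (((Finset.Icc 1 n).inf' (Finset.nonempty_Icc.mpr hn) ψl)
          / ((Finset.Icc 1 n).sup' (Finset.nonempty_Icc.mpr hn) ψu)))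
      ((Finset.Icc 1 n).inf' (Finset.nonempty_Icc.mpr hn)
        (fun i => (Finset.Icc 1 R).inf' (Finset.nonempty_Icc.mpr hR) (σ i))))
    :
    ∃ V' : ℝ → ℝ, ∀ t : ℝ, 0 ≤ t → HasDerivAt V (V' t) t ∧
      ((Wd ≤ ∑ i ∈ Finset.Icc 1 n, (c i - ψd i / (2 * ψl i)) * (z i t) ^ 2 / ψu i →
        V' t ≤ 0) ∧
       (Wd ≤ (1 / 2) * ∑ i ∈ Finset.Icc 1 n, ∑ j ∈ Finset.Icc 1 R,
          σ i j * ‖Φ i j t‖ ^ 2 / γ i j → V' t ≤ 0) ∧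
       (Wd / βd ≤ V t → V' t ≤ 0)) := by
  refine ⟨fun t => (1/2) * ∑ i ∈ Finset.Icc 1 n,
      ((2 * z i t ^ 1 * z' i t * ψ i t - z i t ^ 2 * ψ' i t) / ψ i t ^ 2)
    + (1/2) * ∑ i ∈ Finset.Icc 1 n, ∑ j ∈ Finset.Icc 1 R,
      (((inner ℝ (Φ i j t) (Φ' i j t) : ℝ) + (inner ℝ (Φ' i j t) (Φ i j t) : ℝ)) / γ i j), ?_⟩
  intro t ht
  have hψpos : ∀ i ∈ Finset.Icc 1 n, 0 < ψ i t :=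
    fun i hi => lt_of_lt_of_le (hψl i hi) (hψb i hi t ht).1
  have hψupos : ∀ i ∈ Finset.Icc 1 n, 0 < ψu i :=
    fun i hi => lt_of_lt_of_le (hψpos i hi) (hψb i hi t ht).2
  have hψd0 : ∀ i ∈ Finset.Icc 1 n, 0 ≤ ψd i :=
    fun i hi => le_trans (abs_nonneg _) (hψd i hi t ht)
  -- the derivative
  have hderiv : HasDerivAt V ((1/2) * ∑ i ∈ Finset.Icc 1 n,
      ((2 * z i t ^ 1 * z' i t * ψ i t - z i t ^ 2 * ψ' i t) / ψ i t ^ 2)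
    + (1/2) * ∑ i ∈ Finset.Icc 1 n, ∑ j ∈ Finset.Icc 1 R,
      (((inner ℝ (Φ i j t) (Φ' i j t) : ℝ) + (inner ℝ (Φ' i j t) (Φ i j t) : ℝ)) / γ i j)) t := by
    have hVfun : V = fun s => (1 / 2) * ∑ i ∈ Finset.Icc 1 n, (z i s) ^ 2 / ψ i s
        + (1 / 2) * ∑ i ∈ Finset.Icc 1 n, ∑ j ∈ Finset.Icc 1 R, ‖Φ i j s‖ ^ 2 / γ i j :=
      funext hV
    rw [hVfun]
    apply HasDerivAt.add
    · apply HasDerivAt.const_mul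
      apply HasDerivAt.fun_sum
      intro i hi
      exact ((hzdiff i hi t ht).pow 2).div (hψdiff i hi t ht) (hψpos i hi).ne'
    · apply HasDerivAt.const_mul
      apply HasDerivAt.fun_sum
      intro i hi
      apply HasDerivAt.fun_sum
      intro j hj
      have e : (fun s => ‖Φ i j s‖^2 / γ i j)
          = fun s => (inner ℝ (Φ i j s) (Φ i j s) : ℝ) / γ i j := by
        funext s; rw [real_inner_self_eq_norm_sq]
      rw [e]
      exact (((hΦdiff i hi j hj t ht).inner ℝ (hΦdiff i hi j hj t ht)).div_const (γ i j))
  refine ⟨hderiv, ?_⟩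
  -- structural identity for the derivative
  have hterm1 : ∀ i ∈ Finset.Icc 1 n,
      (1/2) * ((2 * z i t ^ 1 * z' i t * ψ i t - z i t ^ 2 * ψ' i t) / ψ i t ^ 2)
      = (-(c i) * z i t ^ 2 / ψ i t - z i t ^ 2 * ψ' i t / (2 * ψ i t ^ 2)
          - z i t * δ i t - k i * z i t ^ 2
          + (z i t * z (i+1) t - z i t * z (i-1) t))
        + ∑ j ∈ Finset.Icc 1 R, ρ j t * z i t * (inner ℝ (ζ i j t) (Φ i j t) : ℝ) := by
    intro i hi
    have hS : ∑ j ∈ Finset.Icc 1 R, ρ j t * z i t * (inner ℝ (ζ i j t) (Φ i j t) : ℝ)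
        = z i t * ∑ j ∈ Finset.Icc 1 R, ρ j t * (inner ℝ (Φ i j t) (ζ i j t) : ℝ) := by
      rw [Finset.mul_sum]
      refine Finset.sum_congr rfl fun j _ => ?_
      rw [real_inner_comm (Φ i j t) (ζ i j t)]
      ring
    rw [hS, hdyn i hi t ht]
    have hne := (hψpos i hi).ne'
    field_simp
    ring
  have hterm2 : ∀ i ∈ Finset.Icc 1 n, ∀ j ∈ Finset.Icc 1 R,
      (1/2) * ((((inner ℝ (Φ i j t) (Φ' i j t) : ℝ) + (inner ℝ (Φ' i j t) (Φ i j t) : ℝ)) / γ i j))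
      = -(ρ j t * z i t * (inner ℝ (ζ i j t) (Φ i j t) : ℝ))
        - σ i j / γ i j * (‖Φ i j t‖ ^ 2 + (inner ℝ (θ i j) (Φ i j t) : ℝ)) := by
    intro i hi j hj
    have hne := (hγ i hi j hj).ne'
    rw [real_inner_comm (Φ' i j t) (Φ i j t), hadapt i hi j hj t ht]
    simp only [inner_sub_left, real_inner_smul_left, inner_add_left,
      real_inner_self_eq_norm_sq]
    field_simp
    ring
  have htel : ∑ i ∈ Finset.Icc 1 n, z i t * z (i+1) t
      = ∑ i ∈ Finset.Icc 1 n, z i t * z (i-1) t :=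
    telescope_aux n hn (fun i => z i t) (hzzero t) (hztop t)
  have hVeq : ((1/2) * ∑ i ∈ Finset.Icc 1 n,
      ((2 * z i t ^ 1 * z' i t * ψ i t - z i t ^ 2 * ψ' i t) / ψ i t ^ 2)
    + (1/2) * ∑ i ∈ Finset.Icc 1 n, ∑ j ∈ Finset.Icc 1 R,
      (((inner ℝ (Φ i j t) (Φ' i j t) : ℝ) + (inner ℝ (Φ' i j t) (Φ i j t) : ℝ)) / γ i j))
    = ∑ i ∈ Finset.Icc 1 n,
        (-(c i) * z i t ^ 2 / ψ i t - z i t ^ 2 * ψ' i t / (2 * ψ i t ^ 2)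
          - z i t * δ i t - k i * z i t ^ 2)
      - ∑ i ∈ Finset.Icc 1 n, ∑ j ∈ Finset.Icc 1 R,
        σ i j / γ i j * (‖Φ i j t‖ ^ 2 + (inner ℝ (θ i j) (Φ i j t) : ℝ)) := by
    have e1 : (1/2) * ∑ i ∈ Finset.Icc 1 n,
        ((2 * z i t ^ 1 * z' i t * ψ i t - z i t ^ 2 * ψ' i t) / ψ i t ^ 2)
        = ∑ i ∈ Finset.Icc 1 n,
          ((-(c i) * z i t ^ 2 / ψ i t - z i t ^ 2 * ψ' i t / (2 * ψ i t ^ 2)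
            - z i t * δ i t - k i * z i t ^ 2
            + (z i t * z (i+1) t - z i t * z (i-1) t))
          + ∑ j ∈ Finset.Icc 1 R, ρ j t * z i t * (inner ℝ (ζ i j t) (Φ i j t) : ℝ)) := by
      rw [Finset.mul_sum]
      exact Finset.sum_congr rfl hterm1
    have e2 : (1/2) * ∑ i ∈ Finset.Icc 1 n, ∑ j ∈ Finset.Icc 1 R,
        (((inner ℝ (Φ i j t) (Φ' i j t) : ℝ) + (inner ℝ (Φ' i j t) (Φ i j t) : ℝ)) / γ i j)
        = ∑ i ∈ Finset.Icc 1 n, ∑ j ∈ Finset.Icc 1 R,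
          (-(ρ j t * z i t * (inner ℝ (ζ i j t) (Φ i j t) : ℝ))
            - σ i j / γ i j * (‖Φ i j t‖ ^ 2 + (inner ℝ (θ i j) (Φ i j t) : ℝ))) := by
      rw [Finset.mul_sum]
      refine Finset.sum_congr rfl fun i hi => ?_
      rw [Finset.mul_sum]
      exact Finset.sum_congr rfl (hterm2 i hi)
    rw [e1, e2]
    simp only [Finset.sum_add_distrib, Finset.sum_sub_distrib, Finset.sum_neg_distrib]
    rw [htel]
    ring
  -- bound on the z-part
  have hXb : ∀ i ∈ Finset.Icc 1 n,
      (-(c i) * z i t ^ 2 / ψ i t - z i t ^ 2 * ψ' i t / (2 * ψ i t ^ 2)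
        - z i t * δ i t - k i * z i t ^ 2)
      ≤ -((c i - ψd i / (2 * ψl i)) * (z i t) ^ 2 / ψu i) + d i ^ 2 / (4 * k i) := by
    intro i hi
    obtain ⟨hbl, hbu⟩ := hψb i hi t ht
    have hP := hψpos i hi
    have hu := hψupos i hi
    have hl := hψl i hi
    have hki := hk i hi
    have hci := hc i hi
    have hd0 := hψd0 i hi
    obtain ⟨hψ'l, hψ'u⟩ := abs_le.mp (hψd i hi t ht)
    obtain ⟨hδl, hδu⟩ := abs_le.mp (hδ i hi t ht)
    have hq : (0:ℝ) ≤ z i t ^ 2 := sq_nonneg _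
    have claim2 : -(z i t * δ i t) - k i * z i t ^ 2 ≤ d i ^ 2 / (4 * k i) := by
      rw [le_div_iff₀ (by positivity)]
      nlinarith [sq_nonneg (2 * k i * z i t + δ i t), sq_le_sq' hδl hδu]
    have claim1 : -(c i) * z i t ^ 2 / ψ i t - z i t ^ 2 * ψ' i t / (2 * ψ i t ^ 2)
        ≤ -((c i - ψd i / (2 * ψl i)) * (z i t) ^ 2 / ψu i) := by
      have hcl : ψd i < 2 * c i * ψl i := by
        have := (div_lt_iff₀ (by positivity)).mp hci; linarith
      have h1 : 0 ≤ (2 * c i * ψl i - ψd i) * (ψ i t * (ψu i - ψ i t)) :=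
        mul_nonneg (by linarith) (mul_nonneg hP.le (by linarith))
      have h2 : 0 ≤ ψd i * ψu i * (ψ i t - ψl i) :=
        mul_nonneg (mul_nonneg hd0 hu.le) (by linarith)
      have h3 : 0 ≤ ψl i * ψu i * (ψ' i t + ψd i) :=
        mul_nonneg (mul_nonneg hl.le hu.le) (by linarith)
      have num : 0 ≤ 2 * c i * ψ i t * ψl i * ψu i + ψ' i t * ψl i * ψu i
          - 2 * c i * ψ i t ^ 2 * ψl i + ψd i * ψ i t ^ 2 := by nlinarith
      rw [← sub_nonneg]
      have expand : -((c i - ψd i / (2 * ψl i)) * (z i t) ^ 2 / ψu i)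
          - (-(c i) * z i t ^ 2 / ψ i t - z i t ^ 2 * ψ' i t / (2 * ψ i t ^ 2))
          = z i t ^ 2 * (2 * c i * ψ i t * ψl i * ψu i + ψ' i t * ψl i * ψu i
              - 2 * c i * ψ i t ^ 2 * ψl i + ψd i * ψ i t ^ 2)
            / (2 * ψ i t ^ 2 * ψl i * ψu i) := by
        field_simp
        ring
      rw [expand]
      exact div_nonneg (mul_nonneg hq num) (by positivity)
    linarith
  -- bound on the Φ-part
  have hDb : ∀ i ∈ Finset.Icc 1 n, ∀ j ∈ Finset.Icc 1 R,
      -(σ i j / γ i j * (‖Φ i j t‖ ^ 2 + (inner ℝ (θ i j) (Φ i j t) : ℝ)))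
      ≤ -((1/2) * (σ i j * ‖Φ i j t‖ ^ 2 / γ i j))
        + (1/2) * (σ i j * ‖θ i j‖ ^ 2 / γ i j) := by
    intro i hi j hj
    have hg := hγ i hi j hj
    have hs := hσ i hi j hj
    have hip : -(‖θ i j‖ * ‖Φ i j t‖) ≤ (inner ℝ (θ i j) (Φ i j t) : ℝ) :=
      (abs_le.mp (abs_real_inner_le_norm (θ i j) (Φ i j t))).1
    have h2 : ‖Φ i j t‖ ^ 2 / 2 - ‖θ i j‖ ^ 2 / 2
        ≤ ‖Φ i j t‖ ^ 2 + (inner ℝ (θ i j) (Φ i j t) : ℝ) := by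
      nlinarith [sq_nonneg (‖θ i j‖ - ‖Φ i j t‖)]
    have h3 : σ i j / γ i j * (‖Φ i j t‖ ^ 2 / 2 - ‖θ i j‖ ^ 2 / 2)
        ≤ σ i j / γ i j * (‖Φ i j t‖ ^ 2 + (inner ℝ (θ i j) (Φ i j t) : ℝ)) :=
      mul_le_mul_of_nonneg_left h2 (by positivity)
    have h4 : σ i j / γ i j * (‖Φ i j t‖ ^ 2 / 2 - ‖θ i j‖ ^ 2 / 2)
        = (1/2) * (σ i j * ‖Φ i j t‖ ^ 2 / γ i j)
          - (1/2) * (σ i j * ‖θ i j‖ ^ 2 / γ i j) := by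
      field_simp
    linarith
  -- the master bound
  have hmain : ((1/2) * ∑ i ∈ Finset.Icc 1 n,
      ((2 * z i t ^ 1 * z' i t * ψ i t - z i t ^ 2 * ψ' i t) / ψ i t ^ 2)
    + (1/2) * ∑ i ∈ Finset.Icc 1 n, ∑ j ∈ Finset.Icc 1 R,
      (((inner ℝ (Φ i j t) (Φ' i j t) : ℝ) + (inner ℝ (Φ' i j t) (Φ i j t) : ℝ)) / γ i j))
    ≤ -(∑ i ∈ Finset.Icc 1 n, (c i - ψd i / (2 * ψl i)) * (z i t) ^ 2 / ψu i)
      - (1/2) * ∑ i ∈ Finset.Icc 1 n, ∑ j ∈ Finset.Icc 1 R,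
        σ i j * ‖Φ i j t‖ ^ 2 / γ i j + Wd := by
    rw [hVeq, hWd]
    have b1 : ∑ i ∈ Finset.Icc 1 n,
        (-(c i) * z i t ^ 2 / ψ i t - z i t ^ 2 * ψ' i t / (2 * ψ i t ^ 2)
          - z i t * δ i t - k i * z i t ^ 2)
        ≤ ∑ i ∈ Finset.Icc 1 n,
          (-((c i - ψd i / (2 * ψl i)) * (z i t) ^ 2 / ψu i) + d i ^ 2 / (4 * k i)) :=
      Finset.sum_le_sum hXb
    have b2 : ∑ i ∈ Finset.Icc 1 n, ∑ j ∈ Finset.Icc 1 R,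
        (-(σ i j / γ i j * (‖Φ i j t‖ ^ 2 + (inner ℝ (θ i j) (Φ i j t) : ℝ))))
        ≤ ∑ i ∈ Finset.Icc 1 n, ∑ j ∈ Finset.Icc 1 R,
          (-((1/2) * (σ i j * ‖Φ i j t‖ ^ 2 / γ i j))
            + (1/2) * (σ i j * ‖θ i j‖ ^ 2 / γ i j)) :=
      Finset.sum_le_sum fun i hi => Finset.sum_le_sum (hDb i hi)
    simp only [Finset.sum_add_distrib, Finset.sum_sub_distrib, Finset.sum_neg_distrib,
      ← Finset.mul_sum] at b1 b2 ⊢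
    linarith
  have hLz0 : 0 ≤ ∑ i ∈ Finset.Icc 1 n, (c i - ψd i / (2 * ψl i)) * (z i t) ^ 2 / ψu i := by
    refine Finset.sum_nonneg fun i hi => ?_
    have hci := hc i hi
    exact div_nonneg (mul_nonneg (by linarith) (sq_nonneg _)) (hψupos i hi).le
  have hLΦ0 : 0 ≤ (1/2) * ∑ i ∈ Finset.Icc 1 n, ∑ j ∈ Finset.Icc 1 R,
      σ i j * ‖Φ i j t‖ ^ 2 / γ i j := by
    refine mul_nonneg (by norm_num) (Finset.sum_nonneg fun i hi =>
      Finset.sum_nonneg fun j hj => ?_)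
    exact div_nonneg (mul_nonneg (hσ i hi j hj).le (sq_nonneg _)) (hγ i hi j hj).le
  refine ⟨fun h => by linarith, fun h => by linarith, ?_⟩
  -- third condition
  intro h
  obtain ⟨i₀, hi₀⟩ := Finset.nonempty_Icc.mpr hn
  set c0 := (Finset.Icc 1 n).inf' (Finset.nonempty_Icc.mpr hn)
      (fun i => c i - ψd i / (2 * ψl i)) with hc0
  set Lm := (Finset.Icc 1 n).inf' (Finset.nonempty_Icc.mpr hn) ψl with hLm
  set Um := (Finset.Icc 1 n).sup' (Finset.nonempty_Icc.mpr hn) ψu with hUm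
  set s0 := (Finset.Icc 1 n).inf' (Finset.nonempty_Icc.mpr hn)
      (fun i => (Finset.Icc 1 R).inf' (Finset.nonempty_Icc.mpr hR) (σ i)) with hs0
  have hc0pos : 0 < c0 := by
    rw [hc0, Finset.lt_inf'_iff]
    intro i hi
    have := hc i hi; linarith
  have hLmpos : 0 < Lm := by
    rw [hLm, Finset.lt_inf'_iff]
    exact hψl
  have hUmpos : 0 < Um := lt_of_lt_of_le (hψupos i₀ hi₀) (Finset.le_sup' ψu hi₀)
  have hs0pos : 0 < s0 := by
    rw [hs0, Finset.lt_inf'_iff]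
    intro i hi
    rw [Finset.lt_inf'_iff]
    exact hσ i hi
  have hβdpos : 0 < βd := by
    rw [hβd]
    exact lt_min (by positivity) hs0pos
  have hβd1 : βd ≤ 2 * c0 * (Lm / Um) := hβd ▸ min_le_left _ _
  have hβd2 : βd ≤ s0 := hβd ▸ min_le_right _ _
  -- per-term bounds for βd * V
  have hbz : ∀ i ∈ Finset.Icc 1 n, βd * ((1/2) * (z i t ^ 2 / ψ i t))
      ≤ (c i - ψd i / (2 * ψl i)) * (z i t) ^ 2 / ψu i := by
    intro i hi
    obtain ⟨hbl, hbu⟩ := hψb i hi t ht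
    have hP := hψpos i hi
    have hu := hψupos i hi
    have hq : (0:ℝ) ≤ z i t ^ 2 := sq_nonneg _
    have hcc : c0 ≤ c i - ψd i / (2 * ψl i) := Finset.inf'_le _ hi
    have hLl : Lm ≤ ψl i := Finset.inf'_le _ hi
    have hUu : ψu i ≤ Um := Finset.le_sup' _ hi
    have step1 : βd * ((1/2) * (z i t ^ 2 / ψ i t))
        ≤ 2 * c0 * (Lm / Um) * ((1/2) * (z i t ^ 2 / ψ i t)) :=
      mul_le_mul_of_nonneg_right hβd1 (by positivity)
    have step2 : 2 * c0 * (Lm / Um) * ((1/2) * (z i t ^ 2 / ψ i t))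
        = c0 * Lm * z i t ^ 2 / (Um * ψ i t) := by
      field_simp
    have step3 : c0 * Lm * z i t ^ 2 / (Um * ψ i t)
        ≤ (c i - ψd i / (2 * ψl i)) * (z i t) ^ 2 / ψu i := by
      rw [div_le_div_iff₀ (by positivity) hu]
      have hq0 : 0 ≤ c0 * Lm * z i t ^ 2 := by positivity
      have t1 : c0 * Lm * z i t ^ 2 * ψu i ≤ c0 * Lm * z i t ^ 2 * Um :=
        mul_le_mul_of_nonneg_left hUu hq0
      have t2 : c0 * Lm * z i t ^ 2 * Um ≤ c0 * ψ i t * z i t ^ 2 * Um := by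
        have h := mul_nonneg (mul_nonneg (mul_nonneg hc0pos.le hq) hUmpos.le)
          (sub_nonneg.2 (le_trans hLl hbl))
        nlinarith [h]
      have t3 : c0 * ψ i t * z i t ^ 2 * Um
          ≤ (c i - ψd i / (2 * ψl i)) * ψ i t * z i t ^ 2 * Um := by
        have h := mul_nonneg (mul_nonneg (mul_nonneg hP.le hq) hUmpos.le)
          (sub_nonneg.2 hcc)
        nlinarith [h]
      nlinarith [t1, t2, t3]
    linarith [step1, step2 ▸ step1, step3]
  have hbΦ : ∀ i ∈ Finset.Icc 1 n, ∀ j ∈ Finset.Icc 1 R,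
      βd * ((1/2) * (‖Φ i j t‖ ^ 2 / γ i j))
      ≤ (1/2) * (σ i j * ‖Φ i j t‖ ^ 2 / γ i j) := by
    intro i hi j hj
    have hg := hγ i hi j hj
    have hβσ : βd ≤ σ i j :=
      le_trans hβd2 (le_trans (Finset.inf'_le _ hi) (Finset.inf'_le _ hj))
    have hx : (0:ℝ) ≤ (1/2) * (‖Φ i j t‖ ^ 2 / γ i j) := by positivity
    calc βd * ((1/2) * (‖Φ i j t‖ ^ 2 / γ i j))
        ≤ σ i j * ((1/2) * (‖Φ i j t‖ ^ 2 / γ i j)) :=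
          mul_le_mul_of_nonneg_right hβσ hx
      _ = (1/2) * (σ i j * ‖Φ i j t‖ ^ 2 / γ i j) := by ring
  -- βd * V t ≤ Lz + LΦ
  have hβdV : βd * V t
      ≤ (∑ i ∈ Finset.Icc 1 n, (c i - ψd i / (2 * ψl i)) * (z i t) ^ 2 / ψu i)
        + (1/2) * ∑ i ∈ Finset.Icc 1 n, ∑ j ∈ Finset.Icc 1 R,
          σ i j * ‖Φ i j t‖ ^ 2 / γ i j := by
    rw [hV t]
    have e : βd * ((1 / 2) * ∑ i ∈ Finset.Icc 1 n, (z i t) ^ 2 / ψ i t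
        + (1 / 2) * ∑ i ∈ Finset.Icc 1 n, ∑ j ∈ Finset.Icc 1 R, ‖Φ i j t‖ ^ 2 / γ i j)
        = (∑ i ∈ Finset.Icc 1 n, βd * ((1/2) * (z i t ^ 2 / ψ i t)))
          + ∑ i ∈ Finset.Icc 1 n, ∑ j ∈ Finset.Icc 1 R,
            βd * ((1/2) * (‖Φ i j t‖ ^ 2 / γ i j)) := by
      rw [mul_add]
      congr 1
      · rw [← mul_assoc, Finset.mul_sum]
        exact Finset.sum_congr rfl fun i _ => by ring
      · rw [← mul_assoc, Finset.mul_sum]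
        refine Finset.sum_congr rfl fun i _ => ?_
        rw [Finset.mul_sum]
        exact Finset.sum_congr rfl fun j _ => by ring
    rw [e]
    have f1 := Finset.sum_le_sum hbz
    have f2 : ∑ i ∈ Finset.Icc 1 n, ∑ j ∈ Finset.Icc 1 R,
        βd * ((1/2) * (‖Φ i j t‖ ^ 2 / γ i j))
        ≤ ∑ i ∈ Finset.Icc 1 n, ∑ j ∈ Finset.Icc 1 R,
          (1/2) * (σ i j * ‖Φ i j t‖ ^ 2 / γ i j) :=
      Finset.sum_le_sum fun i hi => Finset.sum_le_sum (hbΦ i hi)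
    have e2 : ∑ i ∈ Finset.Icc 1 n, ∑ j ∈ Finset.Icc 1 R,
        (1/2) * (σ i j * ‖Φ i j t‖ ^ 2 / γ i j)
        = (1/2) * ∑ i ∈ Finset.Icc 1 n, ∑ j ∈ Finset.Icc 1 R,
          σ i j * ‖Φ i j t‖ ^ 2 / γ i j := by
      simp only [Finset.mul_sum]
    linarith
  have hWβ : Wd ≤ βd * V t := by
    have := (div_le_iff₀ hβdpos).mp h
    linarith [this]
  linarith
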